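/- arXiv:0912.4977 — 3 statements merged into one kernel-verified Lean document; each statement's English description precedes it below -/
import Mathlib

section
/- Let 𝒜 be an algebra of subsets of 𝔾 and let μ : 𝒜 → [0,∞) be a content (μ(∅) = 0, μ finitely additive on disjoint sets) with μ(𝔾) = 1 such that: (i) for every prime p and every M ⊆ 𝒫 one has π_p⁻¹(M) ∈ 𝒜, and (ii) for any finitely many distinct primes p₁,…,p_k and sets M₁,…,M_k ⊆ 𝒫, μ(⋂_{i=1}^k π_{p_i}⁻¹(M_i)) = ∏_{i=1}^k P_{p_i}(M_i). For G ∈ 𝔾 define ord(G) := ∏_p p^{|G_p|}, where |λ| is the integer that the partition λ partitions. Then for every n ≥ 1, if S_n := {G ∈ 𝔾 : ord(G) = n} belongs to 𝒜, then μ(S_n) = 0. Consequently, if all S_n belong to 𝒜, then 𝔾 is a countable disjoint union of μ-null sets of 𝒜, so μ is not countably additive. -/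
open Filter Topology

/-- The type of all integer partitions (of all natural numbers `n`). -/
def PartitionsAll : Type := Σ n : ℕ, Nat.Partition n

/-- The empty partition of `0`. -/
def partZero : PartitionsAll := ⟨0, ⟨0, by simp, rfl⟩⟩

/-- The unique partition of `1`. -/
def partOne : PartitionsAll :=
  ⟨1, ⟨{1}, by intro i hi; rw [Multiset.mem_singleton] at hi; omega, rfl⟩⟩

instance : Zero PartitionsAll := ⟨partZero⟩

/-- The set of isomorphism classes of finite abelian groups, identified with the
finitely supported families of partitions indexed by the primes. -/
abbrev GG : Type := Nat.Primes →₀ PartitionsAll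

/-- The finite abelian `p`-group `⊕ⱼ ℤ/p^{λ_j}ℤ` corresponding to a partition `λ`. -/
abbrev pGroup (p : ℕ) (lam : PartitionsAll) : Type :=
  ∀ i : Fin lam.2.parts.toList.length, ZMod (p ^ lam.2.parts.toList.get i)

/-- The Cohen–Lenstra weight `w_p(λ) = 1/#Aut(G_{p,λ})`. -/
noncomputable def wCL (p : ℕ) (lam : PartitionsAll) : ℝ :=
  ((Nat.card (AddAut (pGroup p lam)) : ℝ))⁻¹

/-- `∏_{i=1}^∞ (1 - p^{-i})`. -/
noncomputable def clC (p : ℕ) : ℝ := ∏' i : ℕ, (1 - ((p : ℝ))⁻¹ ^ (i + 1))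

/-- The local Cohen–Lenstra probability `P_p(S) = (∑_{λ∈S} w_p(λ)) ∏_{i≥1}(1-p^{-i})`. -/
noncomputable def Pp (p : ℕ) (S : Set PartitionsAll) : ℝ :=
  (∑' lam : S, wCL p lam) * clC p

/-- The primes `≤ x`. -/
def primesUpTo (x : ℕ) : Finset ℕ := Nat.primesBelow (x + 1)

/-- The partial products `∏_{p ≤ x} P_p(S)`. -/
noncomputable def globPartial (S : Set PartitionsAll) (x : ℕ) : ℝ :=
  ∏ p ∈ primesUpTo x, Pp p S

/-- The global value `lim_{x→∞} ∏_{p ≤ x} P_p(S)` (the limit exists since all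
factors lie in `[0,1]`). -/
noncomputable def glob (S : Set PartitionsAll) : ℝ :=
  limUnder atTop (globPartial S)

/-- `O(S) = {G : G_p ∈ S for all primes p}`. -/
def Oset (S : Set PartitionsAll) : Set GG := {G : GG | ∀ p : Nat.Primes, G p ∈ S}

/-- `O(E₁, …, E_r) = O(E₁) ∪ … ∪ O(E_r)`. -/
def OOset {r : ℕ} (E : Fin r → Set PartitionsAll) : Set GG := ⋃ i, Oset (E i)

/-- Inclusion–exclusion value of `O(E₁, …, E_r)`. -/
noncomputable def PO {r : ℕ} (E : Fin r → Set PartitionsAll) : ℝ :=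
  ∑ T ∈ Finset.univ.filter (fun T : Finset (Fin r) => T.Nonempty),
    (-1 : ℝ) ^ (T.card + 1) * glob (⋂ i ∈ T, E i)

/-- The collection `𝔇` of sets `D(E₁,…,E_r;F₁,…,F_s)`. -/
def DD : Set (Set GG) :=
  {A | ∃ (r s : ℕ) (E : Fin r → Set PartitionsAll) (F : Fin s → Set PartitionsAll),
      OOset F ⊆ OOset E ∧ A = OOset E \ OOset F}

/-- The value `P(D)` of a set `D ∈ 𝔇` (well-defined: it depends only on the set `D`). -/
noncomputable def PDval (A : Set GG) : ℝ :=
  sSup {x : ℝ | ∃ (r s : ℕ) (E : Fin r → Set PartitionsAll) (F : Fin s → Set PartitionsAll),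
      OOset F ⊆ OOset E ∧ A = OOset E \ OOset F ∧ x = PO E - PO F}

/-- The outer measure `ν`. -/
noncomputable def nuCL (A : Set GG) : ℝ :=
  sInf {x : ℝ | ∃ C : ℕ → Set GG, (∀ i, C i ∈ DD) ∧ A ⊆ ⋃ i, C i ∧ x = ∑' i, PDval (C i)}

/-- The order of a finite abelian group. -/
def ordG (G : GG) : ℕ := G.prod fun p lam => (p : ℕ) ^ lam.1

/-- The exponent of a finite abelian group. -/
def expG (G : GG) : ℕ := G.prod fun p lam => (p : ℕ) ^ lam.2.parts.sup

/-!
A group of order `n` has trivial `p`-part at every prime `p > n`, so for every finite set `I` of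
primes exceeding `n` the set `S_n` lies in `⋂_{p ∈ I} π_p⁻¹{0}`, whose content is
`∏_{p ∈ I} ∏_{i ≥ 1} (1 - p⁻ⁱ) ≤ ∏_{p ∈ I} (1 - p⁻¹) ≤ exp (-∑_{p ∈ I} p⁻¹)`.
As `∑ p⁻¹` diverges, `μ(S_n) = 0`. The `S_n` partition `𝔾`, so countable additivity would give
`1 = μ(𝔾) = ∑ μ(S_n) = 0`.
-/

open MeasureTheory

theorem PartitionsAll.eq_zero_of_fst_eq_zero {lam : PartitionsAll} (h : lam.1 = 0) : lam = 0 := by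
  obtain ⟨m, P⟩ := lam
  subst h
  exact congrArg _ (Subsingleton.elim _ _)

theorem wCL_zero (p : ℕ) : wCL p 0 = 1 := by
  have : IsEmpty (Fin (partZero.2.parts.toList.length)) := by
    simp only [partZero, Multiset.toList_zero, List.length_nil]
    infer_instance
  simp [wCL]

theorem Pp_singleton_zero (p : ℕ) : Pp p {0} = clC p := by
  rw [Pp, tsum_singleton (0 : PartitionsAll) (wCL p), wCL_zero, one_mul]

theorem tprod_one_sub_pow_succ_le {x : ℝ} (hx0 : 0 ≤ x) (hx1 : x < 1) :
    ∏' i : ℕ, (1 - x ^ (i + 1)) ≤ 1 - x := by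
  have hsum : Summable fun i : ℕ => -(x ^ 2 * x ^ i) :=
    ((summable_geometric_of_lt_one hx0 hx1).mul_left (x ^ 2)).neg
  have hmul : Multipliable fun i : ℕ => 1 - x ^ (i + 1 + 1) := by
    convert Real.multipliable_one_add_of_summable hsum using 2 with i
    ring
  have htail : ∏' i : ℕ, (1 - x ^ (i + 1 + 1)) ≤ 1 :=
    tprod_le_of_prod_le' le_rfl fun s => Finset.prod_le_one
      (fun _ _ => sub_nonneg.2 (pow_le_one₀ hx0 hx1.le)) fun _ _ => sub_le_self _ (by positivity)
  rw [tprod_eq_zero_mul' (f := fun i => 1 - x ^ (i + 1)) hmul, zero_add, pow_one]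
  exact mul_le_of_le_one_right (by linarith) htail

theorem clC_nonneg (p : ℕ) : 0 ≤ clC p :=
  tprod_nonneg fun _ => sub_nonneg.2 <| pow_le_one₀ (by positivity) (Nat.cast_inv_le_one p)

theorem clC_le_one_sub_inv {p : ℕ} (hp : 1 < p) : clC p ≤ 1 - (p : ℝ)⁻¹ :=
  tprod_one_sub_pow_succ_le (by positivity) (inv_lt_one_of_one_lt₀ (by exact_mod_cast hp))

theorem prod_clC_le_exp (I : Finset Nat.Primes) :
    ∏ p ∈ I, clC p ≤ Real.exp (-∑ p ∈ I, ((p : ℕ) : ℝ)⁻¹) := by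
  rw [← Finset.sum_neg_distrib, Real.exp_sum]
  exact Finset.prod_le_prod (fun p _ => clC_nonneg p) fun p _ =>
    (clC_le_one_sub_inv p.2.one_lt).trans (Real.one_sub_le_exp_neg _)

theorem exists_finset_primes_gt_lt_sum_inv (n : ℕ) (C : ℝ) :
    ∃ I : Finset Nat.Primes, (∀ p ∈ I, n < (p : ℕ)) ∧ C < ∑ p ∈ I, ((p : ℕ) : ℝ)⁻¹ := by
  classical
  set f : Nat.Primes → ℝ := fun p => if n < (p : ℕ) then ((p : ℕ) : ℝ)⁻¹ else 0
  have hval : Tendsto (fun p : Nat.Primes => (p : ℕ)) cofinite atTop :=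
    Nat.cofinite_eq_atTop ▸ Subtype.val_injective.tendsto_cofinite
  have hf : ¬ Summable f := fun hf => Nat.Primes.not_summable_one_div <| hf.congr_cofinite <|
    (hval.eventually_gt_atTop n).mono fun p hp => by simp [f, hp]
  obtain ⟨s, hs⟩ : ∃ s : Finset Nat.Primes, C < ∑ p ∈ s, f p := by
    by_contra! h
    exact hf (summable_of_sum_le (fun p => by positivity) h)
  refine ⟨s.filter fun p => n < (p : ℕ), fun p hp => (Finset.mem_filter.1 hp).2, ?_⟩
  rwa [Finset.sum_filter]

theorem nonpos_of_forall_le_prod_clC {a : ℝ} (n : ℕ)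
    (h : ∀ I : Finset Nat.Primes, (∀ p ∈ I, n < (p : ℕ)) → a ≤ ∏ p ∈ I, clC p) : a ≤ 0 := by
  by_contra! ha
  obtain ⟨I, hIn, hI⟩ := exists_finset_primes_gt_lt_sum_inv n (-Real.log a)
  have := calc
    a ≤ ∏ p ∈ I, clC p := h I hIn
    _ ≤ Real.exp (-∑ p ∈ I, ((p : ℕ) : ℝ)⁻¹) := prod_clC_le_exp I
    _ < Real.exp (Real.log a) := Real.exp_lt_exp.2 (by linarith)
    _ = a := Real.exp_log ha
  exact this.false

theorem pow_apply_fst_dvd_ordG (G : GG) (p : Nat.Primes) : (p : ℕ) ^ (G p).1 ∣ ordG G := by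
  by_cases hp : p ∈ G.support
  · exact Finset.dvd_prod_of_mem _ hp
  · rw [Finsupp.notMem_support_iff.1 hp]
    exact one_dvd _

theorem ordG_pos (G : GG) : 0 < ordG G :=
  Finset.prod_pos fun p _ => pow_pos p.2.pos _

theorem apply_eq_zero_of_ordG_lt {G : GG} {p : Nat.Primes} (h : ordG G < p) : G p = 0 := by
  by_contra hG
  have hp : (p : ℕ) ∣ ordG G :=
    (dvd_pow_self _ fun h0 => hG (PartitionsAll.eq_zero_of_fst_eq_zero h0)).trans
      (pow_apply_fst_dvd_ordG G p)
  exact (Nat.le_of_dvd (ordG_pos G) hp).not_gt h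

theorem content_mono {α : Type*} {A : Set (Set α)} {μ : Set α → ℝ} (hA : IsSetAlgebra A)
    (hnonneg : ∀ s ∈ A, 0 ≤ μ s) (hadd : ∀ s ∈ A, ∀ t ∈ A, Disjoint s t → μ (s ∪ t) = μ s + μ t)
    {s t : Set α} (hs : s ∈ A) (ht : t ∈ A) (hst : s ⊆ t) : μ s ≤ μ t := by
  have hd := hA.sdiff_mem ht hs
  calc μ s ≤ μ s + μ (t \ s) := le_add_of_nonneg_right (hnonneg _ hd)
    _ = μ t := by rw [← hadd s hs _ hd disjoint_sdiff_self_right, Set.union_sdiff_cancel hst]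

theorem content_ordG_fiber_eq_zero {A : Set (Set GG)} {μ : Set GG → ℝ} (hA : IsSetAlgebra A)
    (hnonneg : ∀ s ∈ A, 0 ≤ μ s) (hadd : ∀ s ∈ A, ∀ t ∈ A, Disjoint s t → μ (s ∪ t) = μ s + μ t)
    (hproj : ∀ (p : Nat.Primes) (M : Set PartitionsAll), (fun G : GG => G p) ⁻¹' M ∈ A)
    (hindep : ∀ (I : Finset Nat.Primes) (M : Nat.Primes → Set PartitionsAll),
      μ (⋂ p ∈ I, (fun G : GG => G p) ⁻¹' (M p)) = ∏ p ∈ I, Pp (p : ℕ) (M p))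
    {n : ℕ} (hn : {G : GG | ordG G = n} ∈ A) : μ {G : GG | ordG G = n} = 0 := by
  refine le_antisymm (nonpos_of_forall_le_prod_clC n fun I hI => ?_) (hnonneg _ hn)
  have hsub : {G : GG | ordG G = n} ⊆ ⋂ p ∈ I, (fun G : GG => G p) ⁻¹' {0} := by
    rintro G rfl
    exact Set.mem_iInter₂.2 fun p hp => apply_eq_zero_of_ordG_lt (hI p hp)
  calc μ {G : GG | ordG G = n}
      ≤ μ (⋂ p ∈ I, (fun G : GG => G p) ⁻¹' {0}) :=
        content_mono hA hnonneg hadd hn (hA.biInter_mem I fun p _ => hproj p {0}) hsub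
    _ = ∏ p ∈ I, clC p := by simp only [hindep I fun _ => {0}, Pp_singleton_zero]

theorem order_null_content_general
    (A : Set (Set GG)) (μ : Set GG → ℝ)
    (hempty : ∅ ∈ A)
    (hcompl : ∀ s ∈ A, sᶜ ∈ A)
    (hunion : ∀ s ∈ A, ∀ t ∈ A, s ∪ t ∈ A)
    (hnonneg : ∀ s ∈ A, 0 ≤ μ s)
    (hadd : ∀ s ∈ A, ∀ t ∈ A, Disjoint s t → μ (s ∪ t) = μ s + μ t)
    (htotal : μ Set.univ = 1)
    (hproj : ∀ (p : Nat.Primes) (M : Set PartitionsAll), (fun G : GG => G p) ⁻¹' M ∈ A)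
    (hindep : ∀ (I : Finset Nat.Primes) (M : Nat.Primes → Set PartitionsAll),
      μ (⋂ p ∈ I, (fun G : GG => G p) ⁻¹' (M p)) = ∏ p ∈ I, Pp (p : ℕ) (M p)) :
    (∀ n : ℕ, 1 ≤ n → {G : GG | ordG G = n} ∈ A → μ {G : GG | ordG G = n} = 0) ∧
      ((∀ n : ℕ, 1 ≤ n → {G : GG | ordG G = n} ∈ A) →
        (Pairwise (Function.onFun Disjoint fun n : ℕ => {G : GG | ordG G = n + 1})) ∧
        (⋃ n : ℕ, {G : GG | ordG G = n + 1}) = Set.univ ∧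
        (∀ n : ℕ, μ {G : GG | ordG G = n + 1} = 0) ∧
        ¬ (∀ (C : ℕ → Set GG), (∀ i, C i ∈ A) → (⋃ i, C i) ∈ A →
            Pairwise (Function.onFun Disjoint C) →
            HasSum (fun i => μ (C i)) (μ (⋃ i, C i)))) := by
  have hA : IsSetAlgebra A := ⟨hempty, fun s hs => hcompl s hs, fun s t hs ht => hunion s hs t ht⟩
  have hnull (n : ℕ) (hn : {G : GG | ordG G = n} ∈ A) : μ {G : GG | ordG G = n} = 0 :=
    content_ordG_fiber_eq_zero hA hnonneg hadd hproj hindep hn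
  refine ⟨fun n _ => hnull n, fun hAll => ?_⟩
  have hmem (n : ℕ) : {G : GG | ordG G = n + 1} ∈ A := hAll _ n.succ_pos
  have hdisj : Pairwise (Function.onFun Disjoint fun n : ℕ => {G : GG | ordG G = n + 1}) :=
    (pairwise_disjoint_fiber ordG).comp_of_injective (add_left_injective 1)
  have hU : ⋃ n : ℕ, {G : GG | ordG G = n + 1} = Set.univ := Set.eq_univ_of_forall fun G =>
    Set.mem_iUnion.2 ⟨ordG G - 1, (Nat.sub_one_add_one (ordG_pos G).ne').symm⟩
  have hzero (n : ℕ) : μ {G : GG | ordG G = n + 1} = 0 := hnull _ (hmem n)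
  refine ⟨hdisj, hU, hzero, fun hσ => ?_⟩
  have hsum := hσ _ hmem (hU ▸ hA.univ_mem) hdisj
  rw [hU, htotal] at hsum
  simp only [hzero] at hsum
  exact one_ne_zero (hsum.unique hasSum_zero)

/-- For any content `μ` on an algebra `𝒜` of subsets of `𝔾` compatible with the
local Cohen–Lenstra probabilities, the set `S_n = {G : ord(G) = n}` has content `0`
whenever it is in `𝒜`; consequently, if all `S_n` are in `𝒜`, then `𝔾` is a countable
disjoint union of `μ`-null sets of `𝒜`, so `μ` is not countably additive. -/
theorem order_null_content
    (A : Set (Set GG)) (μ : Set GG → ℝ)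
    (hempty : ∅ ∈ A)
    (hcompl : ∀ s ∈ A, sᶜ ∈ A)
    (hunion : ∀ s ∈ A, ∀ t ∈ A, s ∪ t ∈ A)
    (hμempty : μ ∅ = 0)
    (hnonneg : ∀ s ∈ A, 0 ≤ μ s)
    (hadd : ∀ s ∈ A, ∀ t ∈ A, Disjoint s t → μ (s ∪ t) = μ s + μ t)
    (htotal : μ Set.univ = 1)
    (hproj : ∀ (p : Nat.Primes) (M : Set PartitionsAll), (fun G : GG => G p) ⁻¹' M ∈ A)
    (hindep : ∀ (I : Finset Nat.Primes) (M : Nat.Primes → Set PartitionsAll),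
      μ (⋂ p ∈ I, (fun G : GG => G p) ⁻¹' (M p)) = ∏ p ∈ I, Pp (p : ℕ) (M p)) :
    (∀ n : ℕ, 1 ≤ n → {G : GG | ordG G = n} ∈ A → μ {G : GG | ordG G = n} = 0) ∧
      ((∀ n : ℕ, 1 ≤ n → {G : GG | ordG G = n} ∈ A) →
        (Pairwise (Function.onFun Disjoint fun n : ℕ => {G : GG | ordG G = n + 1})) ∧
        (⋃ n : ℕ, {G : GG | ordG G = n + 1}) = Set.univ ∧
        (∀ n : ℕ, μ {G : GG | ordG G = n + 1} = 0) ∧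
        ¬ (∀ (C : ℕ → Set GG), (∀ i, C i ∈ A) → (⋃ i, C i) ∈ A →
            Pairwise (Function.onFun Disjoint C) →
            HasSum (fun i => μ (C i)) (μ (⋃ i, C i)))) :=
  order_null_content_general A μ hempty hcompl hunion hnonneg hadd htotal hproj hindep
end

section
/- Let E₁,…,E_r ⊆ 𝒫 and E₁',…,E_s' ⊆ 𝒫 be uniform properties, each containing the empty partition 0, such that the sets O(E₁),…,O(E_r) are pairwise distinct with no O(E_i) contained in another O(E_j) (i ≠ j), and similarly for O(E₁'),…,O(E_s'). If O(E₁) ∪ … ∪ O(E_r) = O(E₁') ∪ … ∪ O(E_s'), then r = s and the families of sets {O(E₁),…,O(E_r)} and {O(E₁'),…,O(E_s')} coincide. -/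
open Filter Topology

/-!
A set `O(S)` with `0 ∈ S` is "prime" for finite unions: if `O(S)` is covered by
`O(T₁) ∪ … ∪ O(Tₛ)` but `S ⊄ Tⱼ` for every `j`, pick witnesses `λⱼ ∈ S \ Tⱼ` and place them at `s`
distinct primes (with `0` elsewhere); the resulting group lies in `O(S)` but in no `O(Tⱼ)`.
Hence each `O(Eᵢ)` lies in some `O(E'ⱼ)` and vice versa, and for two antichains of sets this
mutual domination forces a bijection matching equal members.
-/

theorem exists_equiv_eq_of_forall_exists_le {α ι κ : Type*} [PartialOrder α]
    {A : ι → α} {B : κ → α}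
    (hA : ∀ i j, i ≠ j → ¬ A i ≤ A j) (hB : ∀ i j, i ≠ j → ¬ B i ≤ B j)
    (hAB : ∀ i, ∃ j, A i ≤ B j) (hBA : ∀ j, ∃ i, B j ≤ A i) :
    ∃ e : ι ≃ κ, ∀ i, A i = B (e i) := by
  choose f hf using hAB
  choose g hg using hBA
  have hgf : ∀ i, g (f i) = i := fun i =>
    by_contra fun hne => hA i (g (f i)) (Ne.symm hne) ((hf i).trans (hg (f i)))
  have hfg : ∀ j, f (g j) = j := fun j =>
    by_contra fun hne => hB j (f (g j)) (Ne.symm hne) ((hg j).trans (hf (g j)))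
  have hAf : ∀ i, A i = B (f i) := fun i =>
    le_antisymm (hf i) (by simpa only [hgf] using hg (f i))
  exact ⟨⟨f, g, hgf, hfg⟩, hAf⟩

theorem Oset_mono {S T : Set PartitionsAll} (h : S ⊆ T) : Oset S ⊆ Oset T :=
  fun _ hG p => h (hG p)

theorem exists_subset_of_Oset_subset_iUnion {ι : Type*} [Finite ι] {S : Set PartitionsAll}
    (T : ι → Set PartitionsAll) (hS : partZero ∈ S) (h : Oset S ⊆ ⋃ j, Oset (T j)) :
    ∃ j, S ⊆ T j := by
  by_contra! hST
  choose v hvS hvT using fun j => Set.not_subset.mp (hST j)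
  let q : ι ↪ Nat.Primes :=
    (Finite.equivFin ι).toEmbedding.trans (Fin.valEmbedding.trans (Infinite.natEmbedding _))
  let G : GG := Finsupp.embDomain q (Finsupp.equivFunOnFinite.symm v)
  have hG : G ∈ Oset S := by
    intro p
    by_cases hp : p ∈ Set.range q
    · obtain ⟨j, rfl⟩ := hp
      simpa [G] using hvS j
    · rw [Finsupp.embDomain_of_notMem_range _ _ _ hp]
      exact hS
  obtain ⟨j, hGj⟩ := Set.mem_iUnion.mp (h hG)
  exact hvT j (by simpa [G] using hGj (q j))

/-- Uniqueness of maximal representations: if two families of uniform properties, each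
containing the empty partition, have pairwise incomparable (in particular pairwise
distinct) sets `O(Eᵢ)`, and the unions agree, then the families of sets coincide. -/
theorem maximal_representation_unique (r s : ℕ)
    (E : Fin r → Set PartitionsAll) (E' : Fin s → Set PartitionsAll)
    (hE0 : ∀ i, partZero ∈ E i) (hE'0 : ∀ j, partZero ∈ E' j)
    (hmax : ∀ i j, i ≠ j → ¬ Oset (E i) ⊆ Oset (E j))
    (hmax' : ∀ i j, i ≠ j → ¬ Oset (E' i) ⊆ Oset (E' j))
    (hun : (⋃ i, Oset (E i)) = ⋃ j, Oset (E' j)) :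
    r = s ∧ Set.range (fun i => Oset (E i)) = Set.range (fun j => Oset (E' j)) := by
  have hEE' : ∀ i, ∃ j, Oset (E i) ⊆ Oset (E' j) := fun i =>
    (exists_subset_of_Oset_subset_iUnion E' (hE0 i)
      (hun ▸ Set.subset_iUnion (fun i => Oset (E i)) i)).imp fun _ => Oset_mono
  have hE'E : ∀ j, ∃ i, Oset (E' j) ⊆ Oset (E i) := fun j =>
    (exists_subset_of_Oset_subset_iUnion E (hE'0 j)
      (hun.symm ▸ Set.subset_iUnion (fun j => Oset (E' j)) j)).imp fun _ => Oset_mono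
  obtain ⟨e, he⟩ := exists_equiv_eq_of_forall_exists_le hmax hmax' hEE' hE'E
  refine ⟨by simpa using Fintype.card_congr e, ?_⟩
  rw [← e.surjective.range_comp]
  exact congrArg Set.range (funext he)
end

section
/- Let D = D(E₁,…,E_r; F₁,…,F_s) ∈ 𝔇, where each E_i is a finite subset of 𝒫 containing the empty partition 0, and assume O(E_i) ⊄ O(F_{i'}) for all i ∈ {1,…,r} and i' ∈ {1,…,s}. Let (D̃_j)_{j∈ℕ} be a family in 𝔇 with D̃_j = D(Ẽ_{j,1},…,Ẽ_{j,r_j}; F̃_{j,1},…,F̃_{j,s_j}), and suppose D ⊆ ⋃_j D̃_j. Then for each i ∈ {1,…,r} there exists j such that O(E_i) ⊆ O(Ẽ_{j,1},…,Ẽ_{j,r_j}) and O(E_i) ⊄ O(F̃_{j,1},…,F̃_{j,s_j}). -/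
open Filter Topology

/-- Infinitely many primes, as an `Infinite` instance on `Nat.Primes`. -/
instance : Infinite Nat.Primes := Nat.infinite_setOf_prime.to_subtype

/-- For a finite set `S` of partitions containing the empty partition, there is a
finite abelian group `G` all of whose local components lie in `S` and which attains
every element of `S` as a local component. -/
lemma exists_generic (S : Set PartitionsAll) (hS : S.Finite) (h0 : partZero ∈ S) :
    ∃ G : GG, (∀ p : Nat.Primes, G p ∈ S) ∧ ∀ lam ∈ S, ∃ p : Nat.Primes, G p = lam := by
  classical
  haveI : Fintype ↥S := hS.fintype
  let emb : ↥S ↪ Nat.Primes :=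
    ((Fintype.equivFin ↥S).toEmbedding.trans Fin.valEmbedding).trans
      (Infinite.natEmbedding Nat.Primes)
  let f : Nat.Primes → PartitionsAll :=
    fun p => if h : ∃ lam : ↥S, emb lam = p then (h.choose : PartitionsAll) else 0
  have hf : ∀ p, f p ≠ 0 → p ∈ Finset.univ.image emb := by
    intro p hp
    simp only [f] at hp
    split_ifs at hp with h
    · obtain ⟨lam, hl⟩ := h
      exact Finset.mem_image.2 ⟨lam, Finset.mem_univ _, hl⟩
    · exact absurd rfl hp
  refine ⟨Finsupp.onFinset _ f hf, ?_, ?_⟩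
  · intro p
    rw [Finsupp.onFinset_apply]
    simp only [f]
    split_ifs with h
    · exact (h.choose).2
    · exact h0
  · intro lam hlam
    refine ⟨emb ⟨lam, hlam⟩, ?_⟩
    have h : ∃ lam' : ↥S, emb lam' = emb ⟨lam, hlam⟩ := ⟨⟨lam, hlam⟩, rfl⟩
    rw [Finsupp.onFinset_apply]
    simp only [f]
    rw [dif_pos h]
    have := emb.injective h.choose_spec
    rw [this]

/-- Let `D = D(E₁,…,E_r;F₁,…,F_s) ∈ 𝔇` with all `Eᵢ` finite subsets of `𝒫` containing
the empty partition, and `O(Eᵢ) ⊄ O(F_{i'})` for all `i, i'`. If `D` is covered by a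
countable family `D̃ⱼ = D(Ẽⱼ;F̃ⱼ) ∈ 𝔇`, then for each `i` there is a `j` with
`O(Eᵢ) ⊆ O(Ẽⱼ,₁,…)` and `O(Eᵢ) ⊄ O(F̃ⱼ,₁,…)`. -/
theorem cover_lemma_on_DD (r s : ℕ)
    (E : Fin r → Set PartitionsAll) (F : Fin s → Set PartitionsAll)
    (hEfin : ∀ i, (E i).Finite) (hE0 : ∀ i, partZero ∈ E i)
    (hEF : OOset F ⊆ OOset E)
    (hnot : ∀ i i', ¬ Oset (E i) ⊆ Oset (F i'))
    (rt st : ℕ → ℕ)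
    (Et : ∀ j, Fin (rt j) → Set PartitionsAll)
    (Ft : ∀ j, Fin (st j) → Set PartitionsAll)
    (hDt : ∀ j, OOset (Ft j) ⊆ OOset (Et j))
    (hcover : OOset E \ OOset F ⊆ ⋃ j, (OOset (Et j) \ OOset (Ft j))) :
    ∀ i, ∃ j, Oset (E i) ⊆ OOset (Et j) ∧ ¬ Oset (E i) ⊆ OOset (Ft j) := by
  intro i
  by_contra hcon
  push_neg at hcon
  obtain ⟨G, hG1, hG2⟩ := exists_generic (E i) (hEfin i) (hE0 i)
  have hGE : G ∈ Oset (E i) := hG1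
  have hGF : G ∉ OOset F := by
    intro hGF
    obtain ⟨i', hi'⟩ := Set.mem_iUnion.1 hGF
    obtain ⟨H, hHE, hHF⟩ := Set.not_subset.1 (hnot i i')
    rw [Oset, Set.mem_setOf_eq] at hHF
    push_neg at hHF
    obtain ⟨p, hp⟩ := hHF
    obtain ⟨q, hq⟩ := hG2 (H p) (hHE p)
    exact hp (hq ▸ hi' q)
  have hGD : G ∈ OOset E \ OOset F := ⟨Set.mem_iUnion.2 ⟨i, hGE⟩, hGF⟩
  obtain ⟨j, hj⟩ := Set.mem_iUnion.1 (hcover hGD)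
  by_cases hsub : Oset (E i) ⊆ OOset (Et j)
  · exact hj.2 (hcon j hsub hGE)
  · obtain ⟨H, hHE, hHnot⟩ := Set.not_subset.1 hsub
    obtain ⟨i'', hi''⟩ := Set.mem_iUnion.1 hj.1
    have hHnot' : H ∉ Oset (Et j i'') := fun hh => hHnot (Set.mem_iUnion.2 ⟨i'', hh⟩)
    rw [Oset, Set.mem_setOf_eq] at hHnot'
    push_neg at hHnot'
    obtain ⟨q, hq⟩ := hHnot'
    obtain ⟨p, hp⟩ := hG2 (H q) (hHE q)
    exact hq (hp ▸ hi'' p)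
end
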